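/- arXiv:2209.03045 — 2 statements merged into one kernel-verified Lean document; each statement's English description precedes it below -/
import Mathlib

section
/- Let n ≥ 1 and v ∈ ℝⁿ. Then the number of strictly positive coordinates of the Euclidean projection Π_{Δⁿ}(v) of v onto the standard simplex Δⁿ equals the cut-off integer ρ(v); that is, ‖Π_{Δⁿ}(v)‖₀ = ρ(v). -/
open Finset


lemma card_filter_val_lt (n k : ℕ) (hk : k ≤ n) :
    (univ.filter fun j : Fin n => (j:ℕ) < k).card = k := by
  rw [show (univ.filter fun j : Fin n => (j:ℕ) < k).card = (Finset.range k).card from ?_,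
    Finset.card_range]
  refine Finset.card_bij (fun j _ => (j:ℕ)) ?_ ?_ ?_
  · intro a ha; simp at ha ⊢; omega
  · intro a ha b hb h; exact Fin.val_injective h
  · intro b hb; simp at hb; exact ⟨⟨b, by omega⟩, by simp; omega, rfl⟩

lemma downclosed_eq_init (n : ℕ) (T : Finset (Fin n))
    (hdown : ∀ j ∈ T, ∀ j' : Fin n, j' ≤ j → j' ∈ T) :
    T = univ.filter (fun j : Fin n => (j:ℕ) < T.card) := by
  ext j
  simp only [mem_filter, mem_univ, true_and]
  constructor
  · intro hj
    have hsub : Finset.Iic j ⊆ T := fun j' hj' =>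
      hdown j hj j' (Finset.mem_Iic.mp hj')
    have := Finset.card_le_card hsub
    simp at this; omega
  · intro hj
    by_contra hjT
    have hsub : T ⊆ Finset.Iio j := by
      intro j' hj'
      rw [Finset.mem_Iio]
      by_contra hge
      exact hjT (hdown j' hj' j (le_of_not_gt hge))
    have := Finset.card_le_card hsub
    simp [Fin.lt_def] at this
    omega

lemma proj_lagrange (n : ℕ) (v w : EuclideanSpace ℝ (Fin n))
    (hw0 : ∀ i, 0 ≤ w i) (hw1 : ∑ i, w i = 1)
    (hwmin : ∀ u : EuclideanSpace ℝ (Fin n), (∀ i, 0 ≤ u i) → (∑ i, u i = 1) →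
      ‖w - v‖ ≤ ‖u - v‖)
    (i j : Fin n) (hi : 0 < w i) : w i - v i ≤ w j - v j := by
  by_cases hij : i = j
  · exact le_of_eq (by rw [hij])
  by_contra hd
  set d : ℝ := (w j - v j) - (w i - v i) with hd_def
  have hdneg : d < 0 := by simp [hd_def]; linarith
  set ε : ℝ := min (w i) (-d/2) with hε_def
  have hε0 : 0 < ε := lt_min hi (by linarith)
  have hεwi : ε ≤ w i := min_le_left _ _
  have hεd : ε ≤ -d/2 := min_le_right _ _
  set u : EuclideanSpace ℝ (Fin n) :=
    WithLp.toLp 2 (fun k => w k + (if k = j then ε else 0) - (if k = i then ε else 0)) with hu_def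
  have hu_apply : ∀ k, u k = w k + (if k = j then ε else 0) - (if k = i then ε else 0) :=
    fun k => rfl
  have hu0 : ∀ k, 0 ≤ u k := by
    intro k
    rw [hu_apply]
    rcases eq_or_ne k i with rfl | hki <;> rcases eq_or_ne k j with rfl | hkj
    · exact absurd rfl hij
    · simp [hij, hkj]; linarith
    · simp [hki]; have := hw0 k; positivity
    · simp [hki, hkj]; exact hw0 k
  have hu1 : ∑ k, u k = 1 := by
    simp only [hu_apply]
    rw [Finset.sum_sub_distrib, Finset.sum_add_distrib, Finset.sum_ite_eq' univ j,
      Finset.sum_ite_eq' univ i]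
    simp [hw1]
  have hle := hwmin u hu0 hu1
  rw [EuclideanSpace.norm_eq, EuclideanSpace.norm_eq] at hle
  have h1 : (0:ℝ) ≤ ∑ k, ‖(w - v) k‖ ^ 2 := Finset.sum_nonneg fun k _ => by positivity
  have h2 : (0:ℝ) ≤ ∑ k, ‖(u - v) k‖ ^ 2 := Finset.sum_nonneg fun k _ => by positivity
  have hsum : ∑ k, ‖(w - v) k‖ ^ 2 ≤ ∑ k, ‖(u - v) k‖ ^ 2 := by
    calc ∑ k, ‖(w - v) k‖ ^ 2 = (Real.sqrt (∑ k, ‖(w - v) k‖ ^ 2)) ^ 2 :=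
          (Real.sq_sqrt h1).symm
      _ ≤ (Real.sqrt (∑ k, ‖(u - v) k‖ ^ 2)) ^ 2 :=
          pow_le_pow_left₀ (Real.sqrt_nonneg _) hle 2
      _ = ∑ k, ‖(u - v) k‖ ^ 2 := Real.sq_sqrt h2
  have split : ∀ f : Fin n → ℝ, ∑ k, f k = f i + f j + ∑ k ∈ univ \ {i, j}, f k := by
    intro f
    rw [← Finset.sum_sdiff (Finset.subset_univ {i, j}), Finset.sum_pair hij]
    ring
  simp only [PiLp.sub_apply, Real.norm_eq_abs, sq_abs] at hsum
  rw [split (fun k => (w k - v k)^2), split (fun k => (u k - v k)^2)] at hsum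
  have heq : ∑ k ∈ univ \ {i, j}, (u k - v k)^2 = ∑ k ∈ univ \ {i, j}, (w k - v k)^2 := by
    refine Finset.sum_congr rfl fun k hk => ?_
    simp only [Finset.mem_sdiff, Finset.mem_insert, Finset.mem_singleton] at hk
    push_neg at hk
    rw [hu_apply]
    simp [hk.2.1, hk.2.2]
  rw [heq] at hsum
  have hui : u i = w i - ε := by rw [hu_apply]; simp [hij]
  have huj : u j = w j + ε := by rw [hu_apply]; simp [Ne.symm hij]
  rw [hui, huj] at hsum
  nlinarith [hsum, hε0, hεd, hdneg]

/-- **Sparsity of the simplex projection.**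
Let `n ≥ 1` and `v ∈ ℝⁿ`.  Let `σ` sort the coordinates of `v` in descending order and let
`ρ` be the cut-off integer of `v` (the largest `k ∈ {1,…,n}` with
`k·v_(k) > (Σ_{j=1}^{k} v_(j)) − 1`).  Then the number of nonzero coordinates of the
Euclidean projection `w` of `v` onto the standard simplex equals `ρ`:
`‖Π_{Δⁿ}(v)‖₀ = ρ(v)`. -/
theorem stmt_1 (n : ℕ) (hn : 1 ≤ n) (v : EuclideanSpace ℝ (Fin n))
    (σ : Equiv.Perm (Fin n)) (hσ : Antitone (fun j : Fin n => v (σ j)))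
    (ρ : ℕ) (hρ1 : 1 ≤ ρ) (hρn : ρ ≤ n)
    (hρcond : (∑ j ∈ Finset.univ.filter (fun j : Fin n => (j : ℕ) < ρ), v (σ j)) - 1 <
      (ρ : ℝ) * v (σ ⟨ρ - 1, by omega⟩))
    (hρmax : ∀ k : ℕ, ∀ hk1 : 1 ≤ k, ∀ hkn : k ≤ n,
      ((∑ j ∈ Finset.univ.filter (fun j : Fin n => (j : ℕ) < k), v (σ j)) - 1 <
        (k : ℝ) * v (σ ⟨k - 1, by omega⟩)) → k ≤ ρ)
    (w : EuclideanSpace ℝ (Fin n))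
    (hw0 : ∀ i, 0 ≤ w i) (hw1 : ∑ i, w i = 1)
    (hwmin : ∀ u : EuclideanSpace ℝ (Fin n), (∀ i, 0 ≤ u i) → (∑ i, u i = 1) →
      ‖w - v‖ ≤ ‖u - v‖) :
    (Finset.univ.filter (fun i : Fin n => w i ≠ 0)).card = ρ := by
  -- there is a positive coordinate
  have hex : ∃ i, 0 < w i := by
    by_contra h
    push_neg at h
    have hz : ∀ i, w i = 0 := fun i => le_antisymm (h i) (hw0 i)
    simp [hz] at hw1
  obtain ⟨i₀, hi₀⟩ := hex
  set τ : ℝ := v i₀ - w i₀ with hτ_def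
  have key := proj_lagrange n v w hw0 hw1 hwmin
  have hpos : ∀ j, 0 < w j → w j = v j - τ := by
    intro j hj
    have h1 := key i₀ j hi₀
    have h2 := key j i₀ hj
    rw [hτ_def]; linarith
  have hzero : ∀ j, w j = 0 → v j ≤ τ := by
    intro j hj
    have := key i₀ j hi₀
    rw [hj] at this; rw [hτ_def]; linarith
  have hchar : ∀ j, w j ≠ 0 ↔ τ < v j := by
    intro j
    constructor
    · intro h
      have hj : 0 < w j := lt_of_le_of_ne (hw0 j) (Ne.symm h)
      have := hpos j hj; linarith
    · intro h hj0
      exact absurd (hzero j hj0) (not_le.mpr h)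
  set T : Finset (Fin n) := univ.filter (fun j : Fin n => w (σ j) ≠ 0) with hT_def
  set m : ℕ := T.card with hm_def
  have hcardS : (univ.filter (fun i : Fin n => w i ≠ 0)).card = m := by
    rw [hm_def, hT_def]
    refine (Finset.card_bij (fun j _ => σ j) ?_ ?_ ?_).symm
    · intro a ha; simp at ha ⊢; exact ha
    · intro a _ b _ h; exact σ.injective h
    · intro b hb; simp at hb; refine ⟨σ.symm b, ?_, by simp⟩
      simp only [Finset.mem_filter, Finset.mem_univ, true_and, ne_eq]
      rw [Equiv.apply_symm_apply σ b]
      exact hb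
  -- T is down-closed hence an initial segment of length m
  have hTdown : ∀ j ∈ T, ∀ j' : Fin n, j' ≤ j → j' ∈ T := by
    intro j hj j' hj'
    rw [hT_def, mem_filter] at hj ⊢
    refine ⟨mem_univ _, ?_⟩
    rw [hchar] at hj ⊢
    exact lt_of_lt_of_le hj.2 (hσ hj')
  have hTm : T = univ.filter (fun j : Fin n => (j:ℕ) < m) := downclosed_eq_init n T hTdown
  have hmn : m ≤ n := by
    rw [hm_def]
    simpa using Finset.card_le_card (Finset.subset_univ T)
  have hm1 : 1 ≤ m := by
    have : σ.symm i₀ ∈ T := by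
      rw [hT_def, mem_filter]
      refine ⟨mem_univ _, ?_⟩
      show ¬ w (σ (σ.symm i₀)) = 0
      rw [Equiv.apply_symm_apply σ i₀]
      exact ne_of_gt hi₀
    have := Finset.card_pos.mpr ⟨_, this⟩
    omega
  -- membership characterization via values
  have hmemT : ∀ j : Fin n, j ∈ T ↔ τ < v (σ j) := by
    intro j; rw [hT_def, mem_filter]; simp [hchar]
  have hmemT' : ∀ j : Fin n, j ∈ T ↔ (j:ℕ) < m := by
    intro j; rw [hTm]; simp
  -- the sum identity
  have hsumT : ∑ j ∈ T, w (σ j) = 1 := by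
    have h : ∑ j, w (σ j) = 1 := by rw [Equiv.sum_comp σ w]; exact hw1
    rw [← h]
    apply Finset.sum_subset (Finset.subset_univ T)
    intro x _ hx
    rw [hT_def] at hx; simp at hx; exact hx
  have hsumv : ∑ j ∈ T, v (σ j) - (m:ℝ) * τ = 1 := by
    rw [← hsumT]
    rw [Finset.sum_congr rfl (fun j hj => hpos (σ j)
      (lt_of_le_of_ne (hw0 _) (Ne.symm (by rw [hT_def] at hj; simpa using hj))))]
    rw [Finset.sum_sub_distrib, Finset.sum_const, nsmul_eq_mul, hm_def]
  -- m ≤ ρ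
  have hmρ : m ≤ ρ := by
    apply hρmax m hm1 hmn
    have hidx : (⟨m - 1, by omega⟩ : Fin n) ∈ T := by
      rw [hmemT']; simp; omega
    rw [hmemT] at hidx
    rw [← hTm]
    have : (0:ℝ) < m := Nat.cast_pos.mpr (by omega)
    nlinarith [hsumv, hidx, this]
  -- ρ ≤ m
  have hρm : ρ ≤ m := by
    by_contra h
    push_neg at h  -- m < ρ
    set t : ℝ := v (σ ⟨ρ - 1, by omega⟩) with ht_def
    have htτ : t ≤ τ := by
      have hmT : (⟨m, by omega⟩ : Fin n) ∉ T := by rw [hmemT']; simp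
      rw [hmemT] at hmT
      push_neg at hmT
      have hle : v (σ ⟨ρ - 1, by omega⟩) ≤ v (σ ⟨m, by omega⟩) :=
        hσ (by rw [Fin.mk_le_mk]; omega)
      rw [ht_def]; linarith
    -- split the sum over j < ρ
    have hsub : (univ.filter fun j : Fin n => (j:ℕ) < m) ⊆
        (univ.filter fun j : Fin n => (j:ℕ) < ρ) := by
      intro x hx; simp at hx ⊢; omega
    set A : Finset (Fin n) :=
      (univ.filter fun j : Fin n => (j:ℕ) < ρ) \ (univ.filter fun j : Fin n => (j:ℕ) < m)
      with hA_def
    have hsplit : ∑ j ∈ univ.filter (fun j : Fin n => (j:ℕ) < ρ), v (σ j)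
        = ∑ j ∈ A, v (σ j) + ∑ j ∈ univ.filter (fun j : Fin n => (j:ℕ) < m), v (σ j) :=
      (Finset.sum_sdiff hsub).symm
    have hcardA : A.card = ρ - m := by
      rw [hA_def, Finset.card_sdiff_of_subset hsub, card_filter_val_lt n ρ hρn,
        card_filter_val_lt n m hmn]
    have hAlb : (A.card : ℝ) * t ≤ ∑ j ∈ A, v (σ j) := by
      have := Finset.card_nsmul_le_sum A (fun j => v (σ j)) t ?_
      · simpa [nsmul_eq_mul] using this
      · intro j hj
        rw [hA_def, Finset.mem_sdiff] at hj
        simp at hj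
        exact hσ (by rw [Fin.le_def]; simp; omega)
    rw [hcardA] at hAlb
    have hcast : ((ρ - m : ℕ) : ℝ) = (ρ:ℝ) - (m:ℝ) := by
      push_cast [Nat.cast_sub (le_of_lt h)]; ring
    rw [hcast] at hAlb
    have hTsum : ∑ j ∈ univ.filter (fun j : Fin n => (j:ℕ) < m), v (σ j)
        = 1 + (m:ℝ) * τ := by rw [← hTm]; linarith [hsumv]
    have hmt : (m:ℝ) * t ≤ (m:ℝ) * τ := by
      apply mul_le_mul_of_nonneg_left htτ (Nat.cast_nonneg m)
    nlinarith [hρcond, hsplit, hAlb, hTsum, hmt]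
  omega
end

section
/- Let n ≥ 1, let T : ℝⁿ → ℝⁿ be a self-adjoint positive-definite linear map with determinant D = det T (so D > 0), and let r > 0. Define the open ellipsoid E := { v ∈ ℝⁿ : ⟨T v, v⟩ < D^{1/n} · r² }. Then ∫_E ⟨T v, v⟩ dv = D^{1/n} · (n/(n+2)) · ω_n · r^{n+2}, where ω_n is the Lebesgue volume of the n-dimensional unit ball. -/
open MeasureTheory Matrix
open scoped RealInnerProductSpace

/-- **Integral of a positive-definite quadratic form over its ellipsoid.**
Let `n ≥ 1`, `T : ℝⁿ → ℝⁿ` self-adjoint positive definite with determinant `D = det T`,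
and `r > 0`.  With `E = {v : ⟨Tv, v⟩ < D^{1/n} r²}`, one has
`∫_E ⟨Tv, v⟩ dv = D^{1/n} · (n/(n+2)) · ω_n · r^{n+2}`, where `ω_n` is the Lebesgue volume
of the `n`-dimensional unit ball. -/
theorem stmt_12 (n : ℕ) (hn : 1 ≤ n)
    (T : EuclideanSpace ℝ (Fin n) →ₗ[ℝ] EuclideanSpace ℝ (Fin n))
    (hsa : ∀ u v : EuclideanSpace ℝ (Fin n), ⟪T u, v⟫ = ⟪u, T v⟫)
    (hpd : ∀ v : EuclideanSpace ℝ (Fin n), v ≠ 0 → 0 < ⟪T v, v⟫)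
    (r : ℝ) (hr : 0 < r) :
    ∫ v in {v : EuclideanSpace ℝ (Fin n) |
        ⟪T v, v⟫ < (LinearMap.det T) ^ ((1 : ℝ) / n) * r ^ 2}, ⟪T v, v⟫ =
      (LinearMap.det T) ^ ((1 : ℝ) / n) * ((n : ℝ) / ((n : ℝ) + 2)) *
        (volume (Metric.ball (0 : EuclideanSpace ℝ (Fin n)) 1)).toReal * r ^ (n + 2) := by
  have hn0 : (0 : ℝ) < n := by exact_mod_cast hn
  haveI : Nontrivial (EuclideanSpace ℝ (Fin n)) := by
    refine nontrivial_of_ne (EuclideanSpace.single ⟨0, hn⟩ 1) 0 fun h => ?_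
    have := congrFun (congrArg (WithLp.equiv 2 (Fin n → ℝ)) h) ⟨0, hn⟩
    simpa using this
  set e := WithLp.equiv 2 (Fin n → ℝ) with he
  set A : Matrix (Fin n) (Fin n) ℝ := Matrix.toEuclideanLin.symm T with hA
  have hTA : T = Matrix.toEuclideanLin A := (Matrix.toEuclideanLin.apply_symm_apply T).symm
  have hinner : ∀ u v : EuclideanSpace ℝ (Fin n), ⟪T u, v⟫ = (A *ᵥ e u) ⬝ᵥ e v := by
    intro u v
    rw [hTA, EuclideanSpace.inner_eq_star_dotProduct]
    simp [toEuclideanLin_apply]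
    exact dotProduct_comm _ _
  -- A is positive definite
  have hApd : A.PosDef := by
    refine Matrix.PosDef.of_dotProduct_mulVec_pos ?_ ?_
    · ext i j
      have h := hsa (e.symm (Pi.single j 1)) (e.symm (Pi.single i 1))
      rw [hinner, real_inner_comm, hinner] at h
      simp only [he, Equiv.apply_symm_apply, Matrix.mulVec_single,
        dotProduct_single, mul_one] at h
      simpa using h.symm
    · intro x hx
      have hx' : (e.symm x : EuclideanSpace ℝ (Fin n)) ≠ 0 := by
        intro h; apply hx; simpa [he] using congrArg e h
      have := hpd (e.symm x) hx'
      rw [hinner] at this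
      simpa [dotProduct_comm] using this
  have hdetTA : LinearMap.det T = A.det := by
    rw [hTA, Matrix.toEuclideanLin_eq_toLin, LinearMap.det_toLin]
  have hD : 0 < A.det := hApd.det_pos
  set c : ℝ := A.det ^ ((1 : ℝ) / n) with hc
  have hcpos : 0 < c := Real.rpow_pos_of_pos hD _
  have hcn : c ^ n = A.det := by
    rw [hc, ← Real.rpow_natCast (A.det ^ ((1:ℝ)/n)) n, ← Real.rpow_mul hD.le]
    rw [one_div, inv_mul_cancel₀ (by positivity), Real.rpow_one]
  -- square root
  open scoped MatrixOrder in set S : Matrix (Fin n) (Fin n) ℝ := CFC.sqrt A with hS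
  open scoped MatrixOrder in have hSS : S * S = A := CFC.sqrt_mul_sqrt_self A hApd.posSemidef.nonneg
  open scoped MatrixOrder in have hSsym : Sᵀ = S := (CFC.sqrt_nonneg A).posSemidef.isHermitian
  have hdetS2 : S.det * S.det = A.det := by rw [← Matrix.det_mul, hSS]
  have hdetS : IsUnit S.det := by
    refine isUnit_iff_ne_zero.2 fun h => ?_
    rw [h, mul_zero] at hdetS2; exact hD.ne hdetS2
  set M : Matrix (Fin n) (Fin n) ℝ := Real.sqrt c • S⁻¹ with hM
  have hdetM : M.det = (Real.sqrt c) ^ n * (S.det)⁻¹ := by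
    simp [hM, Matrix.det_smul, Matrix.det_nonsing_inv, Ring.inverse_eq_inv']
  have hdetM2 : M.det ^ 2 = 1 := by
    rw [hdetM, mul_pow, ← pow_mul, mul_comm n 2, pow_mul, Real.sq_sqrt hcpos.le, hcn,
      inv_pow, pow_two, hdetS2, mul_inv_cancel₀ hD.ne']
  have habsM : |M.det| = 1 := by
    have h1 : |M.det| ^ 2 = 1 := by rw [sq_abs, hdetM2]
    nlinarith [abs_nonneg M.det]
  have hdetMne : M.det ≠ 0 := by
    intro h; rw [h, abs_zero] at habsM; norm_num at habsM
  set φ : EuclideanSpace ℝ (Fin n) →ₗ[ℝ] EuclideanSpace ℝ (Fin n) := Matrix.toEuclideanLin M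
    with hφ
  have hdetφ : LinearMap.det φ = M.det := by
    rw [hφ, Matrix.toEuclideanLin_eq_toLin, LinearMap.det_toLin]
  have hdetφne : LinearMap.det φ ≠ 0 := by rw [hdetφ]; exact hdetMne
  -- φ is measure preserving
  have hmp : MeasurePreserving φ (volume : Measure (EuclideanSpace ℝ (Fin n))) volume := by
    refine ⟨(LinearMap.continuous_of_finiteDimensional φ).measurable, ?_⟩
    rw [Measure.map_linearMap_addHaar_eq_smul_addHaar volume hdetφne, hdetφ, abs_inv, habsM]
    simp
  have hemb : MeasurableEmbedding φ := by
    have h := ((LinearMap.equivOfDetNeZero φ hdetφne).toContinuousLinearEquiv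
      ).toHomeomorph.measurableEmbedding
    convert h using 1
    rfl
  -- key quadratic computation
  have hSM : S * M = Real.sqrt c • (1 : Matrix (Fin n) (Fin n) ℝ) := by
    rw [hM, Matrix.mul_smul, Matrix.mul_nonsing_inv _ hdetS]
  have hAM : A * M = Real.sqrt c • S := by
    rw [← hSS, Matrix.mul_assoc, hSM, Matrix.mul_smul, mul_one]
  have hquad : ∀ u : EuclideanSpace ℝ (Fin n), ⟪T (φ u), φ u⟫ = c * ‖u‖ ^ 2 := by
    intro u
    rw [hinner]
    have h1 : e (φ u) = M *ᵥ e u := by simp [hφ, he]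
    rw [h1, Matrix.mulVec_mulVec, hAM, hM, Matrix.smul_mulVec,
      Matrix.smul_mulVec, smul_dotProduct, dotProduct_smul,
      smul_smul, smul_eq_mul, Real.mul_self_sqrt hcpos.le]
    congr 1
    rw [Matrix.dotProduct_mulVec, Matrix.vecMul_mulVec]
    have h2 : Sᵀ * S⁻¹ = 1 := by
      rw [hSsym, Matrix.mul_nonsing_inv _ hdetS]
    rw [h2, Matrix.vecMul_one, ← real_inner_self_eq_norm_sq,
      EuclideanSpace.inner_eq_star_dotProduct]
    rfl
  have hpre : ⇑φ ⁻¹' {v : EuclideanSpace ℝ (Fin n) | ⟪T v, v⟫ < c * r ^ 2} =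
      Metric.ball (0 : EuclideanSpace ℝ (Fin n)) r := by
    ext u
    simp only [Set.mem_preimage, Set.mem_setOf_eq, mem_ball_zero_iff]
    rw [hquad, mul_lt_mul_iff_right₀ hcpos]
    exact ⟨fun h => lt_of_pow_lt_pow_left₀ 2 hr.le h,
      fun h => pow_lt_pow_left₀ h (norm_nonneg u) two_ne_zero⟩
  have hballint : ∫ u in Metric.ball (0 : EuclideanSpace ℝ (Fin n)) r, ‖u‖ ^ 2 =
      (n : ℝ) * (volume (Metric.ball (0 : EuclideanSpace ℝ (Fin n)) 1)).toReal *
        (r ^ (n + 2) / ((n : ℝ) + 2)) := by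
    have h1 : ∫ u in Metric.ball (0 : EuclideanSpace ℝ (Fin n)) r, ‖u‖ ^ 2 =
        ∫ u : EuclideanSpace ℝ (Fin n), Set.indicator (Set.Iio r) (fun y => y ^ 2) ‖u‖ := by
      rw [← integral_indicator measurableSet_ball]
      congr 1; ext u
      by_cases h : ‖u‖ < r <;> simp [Set.indicator, h, mem_ball_zero_iff]
    rw [h1, integral_fun_norm_addHaar volume (Set.indicator (Set.Iio r) (fun y => y ^ 2))]
    have hdim : Module.finrank ℝ (EuclideanSpace ℝ (Fin n)) = n := finrank_euclideanSpace_fin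
    rw [hdim]
    have h2 : ∀ y : ℝ, y ^ (n - 1) • Set.indicator (Set.Iio r) (fun z => z ^ 2) y =
        Set.indicator (Set.Iio r) (fun z => z ^ (n + 1)) y := by
      intro y
      by_cases h : y < r <;>
        simp [Set.indicator, h, smul_eq_mul, ← pow_add, show n - 1 + 2 = n + 1 by omega]
    simp_rw [h2]
    rw [integral_indicator measurableSet_Iio, Measure.restrict_restrict measurableSet_Iio,
      Set.Iio_inter_Ioi, ← integral_Ioc_eq_integral_Ioo,
      ← intervalIntegral.integral_of_le hr.le, integral_pow]
    rw [nsmul_eq_mul, smul_eq_mul]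
    push_cast
    rw [measureReal_def]
    ring
  rw [hdetTA, ← hc]
  have hchg := hmp.setIntegral_preimage_emb hemb
    (fun v : EuclideanSpace ℝ (Fin n) => ⟪T v, v⟫)
    {v : EuclideanSpace ℝ (Fin n) | ⟪T v, v⟫ < c * r ^ 2}
  rw [← hchg, hpre]
  have hcongr : ∫ u in Metric.ball (0 : EuclideanSpace ℝ (Fin n)) r, ⟪T (φ u), φ u⟫ =
      ∫ u in Metric.ball (0 : EuclideanSpace ℝ (Fin n)) r, c * ‖u‖ ^ 2 :=
    setIntegral_congr_fun measurableSet_ball (fun u _ => hquad u)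
  rw [hcongr, MeasureTheory.integral_const_mul, hballint]
  have hne : (n : ℝ) + 2 ≠ 0 := by positivity
  field_simp
end
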